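/- arXiv:2511.20323 — 2 statements merged into one kernel-verified Lean document; each statement's English description precedes it below -/
import Mathlib

section
/- Let L be a Lie ring whose derived ideal L' = [L, L] is abelian. Let a be a subring of L that is an additive complement of L' (i.e., L = L' + a and L' ∩ a = 0), and suppose a₀ ∈ a is such that ad_{a₀} restricts to a bijection of L' onto itself. Then a = C_L(a₀). -/
/-!
Since `a ∩ L' = 0` and `[a, a] ⊆ L'`, the subring `a` is abelian, so `a ⊆ C_L(a₀)`. Conversely, write
`y ∈ C_L(a₀)` as `y = z + w` with `z ∈ L'`, `w ∈ a`; then `[a₀, z] = [a₀, y] - [a₀, w] = 0`, and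
injectivity of `ad_{a₀}` on `L'` forces `z = 0`, i.e. `y ∈ a`.
-/

namespace LieAlgebra

variable {R L : Type*} [CommRing R] [LieRing L] [LieAlgebra R L]

theorem lie_mem_derivedSeries_one (x y : L) : ⁅x, y⁆ ∈ derivedSeries R L 1 := by
  rw [derivedSeries_def, derivedSeriesOfIdeal_succ]
  exact LieSubmodule.lie_mem_lie (LieSubmodule.mem_top x) (LieSubmodule.mem_top y)

theorem lie_eq_zero_of_derivedSeries_one_inter_trivial (a : LieSubalgebra R L)
    (hint : ∀ y ∈ derivedSeries R L 1, y ∈ a → y = 0) {x y : L} (hx : x ∈ a) (hy : y ∈ a) :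
    ⁅x, y⁆ = 0 :=
  hint _ (lie_mem_derivedSeries_one x y) (a.lie_mem hx hy)

end LieAlgebra

theorem mem_of_lie_eq_zero_of_sum_of_ker_trivial {L : Type*} [LieRing L] {a M : Set L} {a₀ y : L}
    (hsum : ∀ y : L, ∃ z ∈ M, ∃ w ∈ a, y = z + w)
    (hker : ∀ z ∈ M, ⁅a₀, z⁆ = 0 → z = 0) (hcomm : ∀ w ∈ a, ⁅a₀, w⁆ = 0)
    (hy : ⁅a₀, y⁆ = 0) : y ∈ a := by
  obtain ⟨z, hz, w, hw, rfl⟩ := hsum y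
  have hz₀ : ⁅a₀, z⁆ = 0 := by rwa [lie_add, hcomm w hw, add_zero] at hy
  rwa [hker z hz hz₀, zero_add]

theorem stmt_5_general {L : Type*} [LieRing L]
    (a : LieSubalgebra ℤ L)
    (hsum : ∀ y : L, ∃ z ∈ LieAlgebra.derivedSeries ℤ L 1, ∃ w ∈ a, y = z + w)
    (hint : ∀ y ∈ LieAlgebra.derivedSeries ℤ L 1, y ∈ a → y = 0)
    (a₀ : L) (ha₀ : a₀ ∈ a)
    (hinj : ∀ z ∈ LieAlgebra.derivedSeries ℤ L 1, ∀ w ∈ LieAlgebra.derivedSeries ℤ L 1,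
      ⁅a₀, z⁆ = ⁅a₀, w⁆ → z = w) :
    (a : Set L) = {y : L | ⁅a₀, y⁆ = 0} := by
  have hcomm : ∀ w ∈ a, ⁅a₀, w⁆ = 0 := fun w hw =>
    LieAlgebra.lie_eq_zero_of_derivedSeries_one_inter_trivial a hint ha₀ hw
  have hker : ∀ z ∈ LieAlgebra.derivedSeries ℤ L 1, ⁅a₀, z⁆ = 0 → z = 0 := fun z hz hz₀ =>
    hinj z hz 0 (zero_mem _) (by rw [hz₀, lie_zero])
  ext y
  exact ⟨hcomm y, mem_of_lie_eq_zero_of_sum_of_ker_trivial hsum hker hcomm⟩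

/-- Let `L` be a Lie ring with abelian derived ideal `L'`, let `a` be a subring
of `L` which is an additive complement of `L'` (`L = L' + a` and `L' ∩ a = 0`), and suppose
`a₀ ∈ a` is such that `ad_{a₀}` restricts to a bijection of `L'` onto itself.
Then `a = C_L(a₀)`. -/
theorem stmt_5 {L : Type*} [LieRing L]
    (habel : ∀ a ∈ LieAlgebra.derivedSeries ℤ L 1, ∀ b ∈ LieAlgebra.derivedSeries ℤ L 1,
      ⁅a, b⁆ = (0 : L))
    (a : LieSubalgebra ℤ L)
    (hsum : ∀ y : L, ∃ z ∈ LieAlgebra.derivedSeries ℤ L 1, ∃ w ∈ a, y = z + w)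
    (hint : ∀ y ∈ LieAlgebra.derivedSeries ℤ L 1, y ∈ a → y = 0)
    (a₀ : L) (ha₀ : a₀ ∈ a)
    (hmaps : ∀ z ∈ LieAlgebra.derivedSeries ℤ L 1, ⁅a₀, z⁆ ∈ LieAlgebra.derivedSeries ℤ L 1)
    (hinj : ∀ z ∈ LieAlgebra.derivedSeries ℤ L 1, ∀ w ∈ LieAlgebra.derivedSeries ℤ L 1,
      ⁅a₀, z⁆ = ⁅a₀, w⁆ → z = w)
    (hsurj : ∀ w ∈ LieAlgebra.derivedSeries ℤ L 1,
      ∃ z ∈ LieAlgebra.derivedSeries ℤ L 1, ⁅a₀, z⁆ = w) :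
    (a : Set L) = {y : L | ⁅a₀, y⁆ = 0} :=
  stmt_5_general a hsum hint a₀ ha₀ hinj
end

section
/- Let L be a Lie ring whose derived ideal L' = [L, L] is abelian, nonzero, not contained in the center of L, and minimal in the sense that the only ideals of L contained in L' are 0 and L'. Then for every x ∈ L that does not centralize L', the Cartan subring C_L(x) is abnormal in L: every subring u of L with C_L(x) ⊆ u satisfies N_L(u) = u. In fact the only subrings containing C_L(x) are C_L(x) itself and L. -/
/-
If `L' = A` is abelian and `[x, A] ≠ 0`, then `ad x` restricts to an `L`-module endomorphism of
`A` (the bracket `[[x, y], a]` vanishes since `[x, y] ∈ A`), so its kernel and image are ideals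
inside `A`; minimality makes `ad x` bijective on `A`, whence `L = C_L(x) + A`. For a subring
`u ⊇ C_L(x)` this decomposition makes `u ∩ A` an ideal, so `u = C_L(x)` or `u = L`. Finally if
`y` normalizes `C_L(x)`, then `[y, x] ∈ C_L(x) ∩ A = 0`, so `y ∈ C_L(x)`.
-/

theorem LieAlgebra.lie_mem_derivedSeries_one_s8 {R L : Type*} [CommRing R] [LieRing L]
    [LieAlgebra R L] (y z : L) : ⁅y, z⁆ ∈ derivedSeries R L 1 :=
  LieSubmodule.lie_mem_lie (LieSubmodule.mem_top y) (LieSubmodule.mem_top z)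

namespace LieIdeal

variable {R L : Type*} [CommRing R] [LieRing L] [LieAlgebra R L]

def adKer (A : LieIdeal R L) (hA : ∀ a ∈ A, ∀ b ∈ A, ⁅a, b⁆ = 0) (x : L)
    (hxA : ∀ y, ⁅x, y⁆ ∈ A) : LieIdeal R L where
  carrier := {a | a ∈ A ∧ ⁅x, a⁆ = 0}
  add_mem' := fun ⟨haA, ha⟩ ⟨hbA, hb⟩ => ⟨A.add_mem haA hbA, by rw [lie_add, ha, hb, add_zero]⟩
  zero_mem' := ⟨A.zero_mem, lie_zero x⟩
  smul_mem' n _ := fun ⟨haA, ha⟩ => ⟨A.smul_mem n haA, by rw [lie_smul, ha, smul_zero]⟩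
  lie_mem := fun {y a} ⟨haA, ha⟩ =>
    ⟨A.lie_mem haA, by rw [leibniz_lie, ha, lie_zero, add_zero, hA _ (hxA y) _ haA]⟩

def adRange (A : LieIdeal R L) (hA : ∀ a ∈ A, ∀ b ∈ A, ⁅a, b⁆ = 0) (x : L)
    (hxA : ∀ y, ⁅x, y⁆ ∈ A) : LieIdeal R L where
  carrier := {b | ∃ a ∈ A, ⁅x, a⁆ = b}
  add_mem' := fun ⟨a, haA, ha⟩ ⟨a', ha'A, ha'⟩ =>
    ⟨a + a', A.add_mem haA ha'A, by rw [lie_add, ha, ha']⟩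
  zero_mem' := ⟨0, A.zero_mem, lie_zero x⟩
  smul_mem' n _ := fun ⟨a, haA, ha⟩ => ⟨n • a, A.smul_mem n haA, by rw [lie_smul, ha]⟩
  lie_mem := fun {y : L} _ ⟨a, haA, ha⟩ =>
    ⟨⁅y, a⁆, A.lie_mem haA, by
      rw [← ha, leibniz_lie y x a, ← lie_skew y x, neg_lie, hA _ (hxA y) _ haA, neg_zero,
        zero_add]⟩

def infSubalgebra (A : LieIdeal R L) (hA : ∀ a ∈ A, ∀ b ∈ A, ⁅a, b⁆ = 0)
    (u : LieSubalgebra R L) (hu : ∀ y, ∃ c ∈ u, y - c ∈ A) : LieIdeal R L where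
  carrier := {a | a ∈ A ∧ a ∈ u}
  add_mem' := fun ⟨haA, hau⟩ ⟨hbA, hbu⟩ => ⟨A.add_mem haA hbA, u.add_mem hau hbu⟩
  zero_mem' := ⟨A.zero_mem, u.zero_mem⟩
  smul_mem' n _ := fun ⟨haA, hau⟩ => ⟨A.smul_mem n haA, u.smul_mem n hau⟩
  lie_mem := by
    rintro y a ⟨haA, hau⟩
    obtain ⟨c, hcu, hyc⟩ := hu y
    refine ⟨A.lie_mem haA, ?_⟩
    -- `[y, a] = [c, a]` because `y - c` and `a` lie in the abelian ideal `A`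
    rw [← sub_add_cancel y c, add_lie, hA _ hyc _ haA, zero_add]
    exact u.lie_mem hcu hau

variable {A : LieIdeal R L} {x : L}

theorem eq_zero_of_lie_eq_zero (hA : ∀ a ∈ A, ∀ b ∈ A, ⁅a, b⁆ = 0) (hxA : ∀ y, ⁅x, y⁆ ∈ A)
    (hmin : ∀ J : LieIdeal R L, J ≤ A → J = ⊥ ∨ J = A) (hx : ∃ z ∈ A, ⁅x, z⁆ ≠ 0)
    {a : L} (ha : a ∈ A) (hxa : ⁅x, a⁆ = 0) : a = 0 := by
  obtain ⟨z, hzA, hz⟩ := hx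
  rcases hmin (adKer A hA x hxA) (fun _ h => h.1) with h | h
  · exact (LieSubmodule.eq_bot_iff _).mp h a ⟨ha, hxa⟩
  · rw [← h] at hzA
    exact absurd hzA.2 hz

theorem exists_lie_eq (hA : ∀ a ∈ A, ∀ b ∈ A, ⁅a, b⁆ = 0) (hxA : ∀ y, ⁅x, y⁆ ∈ A)
    (hmin : ∀ J : LieIdeal R L, J ≤ A → J = ⊥ ∨ J = A) (hx : ∃ z ∈ A, ⁅x, z⁆ ≠ 0)
    {b : L} (hb : b ∈ A) : ∃ a ∈ A, ⁅x, a⁆ = b := by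
  obtain ⟨z, hzA, hz⟩ := hx
  rcases hmin (adRange A hA x hxA) (fun _ ⟨a, haA, ha⟩ => ha ▸ A.lie_mem haA) with h | h
  · exact absurd ((LieSubmodule.eq_bot_iff _).mp h _ ⟨z, hzA, rfl⟩) hz
  · rw [← h] at hb
    exact hb

theorem exists_lie_eq_zero_sub_mem (hA : ∀ a ∈ A, ∀ b ∈ A, ⁅a, b⁆ = 0) (hxA : ∀ y, ⁅x, y⁆ ∈ A)
    (hmin : ∀ J : LieIdeal R L, J ≤ A → J = ⊥ ∨ J = A) (hx : ∃ z ∈ A, ⁅x, z⁆ ≠ 0) (y : L) :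
    ∃ c, ⁅x, c⁆ = 0 ∧ y - c ∈ A := by
  obtain ⟨a, haA, ha⟩ := exists_lie_eq hA hxA hmin hx (hxA y)
  exact ⟨y - a, by rw [lie_sub, ha, sub_self], by rwa [sub_sub_cancel]⟩

theorem coe_eq_centralizer_or_eq_top (hA : ∀ a ∈ A, ∀ b ∈ A, ⁅a, b⁆ = 0)
    (hmin : ∀ J : LieIdeal R L, J ≤ A → J = ⊥ ∨ J = A)
    (hdec : ∀ y, ∃ c, ⁅x, c⁆ = 0 ∧ y - c ∈ A) {u : LieSubalgebra R L}
    (hu : {y | ⁅x, y⁆ = 0} ⊆ (u : Set L)) :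
    (u : Set L) = {y | ⁅x, y⁆ = 0} ∨ u = ⊤ := by
  have hdec' : ∀ y, ∃ c ∈ u, y - c ∈ A := fun y =>
    let ⟨c, hc, hyc⟩ := hdec y; ⟨c, hu hc, hyc⟩
  rcases hmin (infSubalgebra A hA u hdec') (fun _ h => h.1) with h | h
  · refine .inl (Set.Subset.antisymm (fun y hyu => ?_) hu)
    obtain ⟨c, hc, hyc⟩ := hdec y
    have : y - c = 0 := (LieSubmodule.eq_bot_iff _).mp h _ ⟨hyc, u.sub_mem hyu (hu hc)⟩
    rwa [sub_eq_zero.mp this]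
  · refine .inr (eq_top_iff.mpr fun y _ => ?_)
    obtain ⟨c, hc, hyc⟩ := hdec y
    rw [← h] at hyc
    simpa using u.add_mem hyc.2 (hu hc)

theorem normalizer_eq_self_of_coe_eq_centralizer (hxA : ∀ y, ⁅x, y⁆ ∈ A)
    (hinj : ∀ a ∈ A, ⁅x, a⁆ = 0 → a = 0) {u : LieSubalgebra R L}
    (hu : (u : Set L) = {y | ⁅x, y⁆ = 0}) : u.normalizer = u := by
  refine le_antisymm (fun y hy => ?_) u.le_normalizer
  have hxu : x ∈ u := by simp [← SetLike.mem_coe, hu]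
  have hyx : ⁅y, x⁆ ∈ (u : Set L) := (u.mem_normalizer_iff y).mp hy x hxu
  rw [hu] at hyx
  have hyx0 : ⁅y, x⁆ = 0 := hinj _ (by rw [← lie_skew]; exact neg_mem (hxA y)) hyx
  have hxy0 : ⁅x, y⁆ = 0 := by rw [← lie_skew, hyx0, neg_zero]
  rw [← SetLike.mem_coe, hu]
  exact hxy0

end LieIdeal

theorem stmt_8_general {L : Type*} [LieRing L]
    (habel : ∀ a ∈ LieAlgebra.derivedSeries ℤ L 1, ∀ b ∈ LieAlgebra.derivedSeries ℤ L 1,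
      ⁅a, b⁆ = (0 : L))
    (hmin : ∀ J : LieIdeal ℤ L, J ≤ LieAlgebra.derivedSeries ℤ L 1 →
      J = ⊥ ∨ J = LieAlgebra.derivedSeries ℤ L 1)
    (x : L) (hx : ¬ ∀ z ∈ LieAlgebra.derivedSeries ℤ L 1, ⁅x, z⁆ = 0) :
    ∀ u : LieSubalgebra ℤ L, {y : L | ⁅x, y⁆ = 0} ⊆ (u : Set L) →
      u.normalizer = u ∧ ((u : Set L) = {y : L | ⁅x, y⁆ = 0} ∨ u = ⊤) := by
  have hxA := LieAlgebra.lie_mem_derivedSeries_one_s8 (R := ℤ) x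
  push Not at hx
  intro u hu
  rcases LieIdeal.coe_eq_centralizer_or_eq_top habel hmin
      (LieIdeal.exists_lie_eq_zero_sub_mem habel hxA hmin hx) hu with h | rfl
  · exact ⟨LieIdeal.normalizer_eq_self_of_coe_eq_centralizer hxA
      (fun _ => LieIdeal.eq_zero_of_lie_eq_zero habel hxA hmin hx) h, .inl h⟩
  · exact ⟨top_unique (LieSubalgebra.le_normalizer ⊤), .inr rfl⟩

/-- Let `L` be a Lie ring whose derived ideal `L'` is abelian, nonzero, not
contained in the center, and minimal.  Then for every `x ∈ L` not centralizing `L'`, the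
Cartan subring `C_L(x)` is abnormal in `L`: every subring `u` with `C_L(x) ⊆ u` satisfies
`N_L(u) = u`.  In fact the only subrings containing `C_L(x)` are `C_L(x)` itself and `L`. -/
theorem stmt_8 {L : Type*} [LieRing L]
    (habel : ∀ a ∈ LieAlgebra.derivedSeries ℤ L 1, ∀ b ∈ LieAlgebra.derivedSeries ℤ L 1,
      ⁅a, b⁆ = (0 : L))
    (hne : ∃ w ∈ LieAlgebra.derivedSeries ℤ L 1, w ≠ (0 : L))
    (hnc : ¬ ∀ w ∈ LieAlgebra.derivedSeries ℤ L 1, ∀ y : L, ⁅y, w⁆ = 0)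
    (hmin : ∀ J : LieIdeal ℤ L, J ≤ LieAlgebra.derivedSeries ℤ L 1 →
      J = ⊥ ∨ J = LieAlgebra.derivedSeries ℤ L 1)
    (x : L) (hx : ¬ ∀ z ∈ LieAlgebra.derivedSeries ℤ L 1, ⁅x, z⁆ = 0) :
    ∀ u : LieSubalgebra ℤ L, {y : L | ⁅x, y⁆ = 0} ⊆ (u : Set L) →
      u.normalizer = u ∧ ((u : Set L) = {y : L | ⁅x, y⁆ = 0} ∨ u = ⊤) :=
  stmt_8_general habel hmin x hx
end
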